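/- arXiv:1104.4401 — 2 statements merged into one kernel-verified Lean document; each statement's English description precedes it below -/
import Mathlib

section
/- The trace map Tr : Sp(2n, q) → F_q, sending a matrix to its trace, is surjective for every n ≥ 1. -/
open Matrix

/-- the trace map `Tr : Sp(2n,q) → F_q` is surjective for `n ≥ 1`. -/
theorem trace_surjective_on_symplectic (F : Type*) [Field F] [Fintype F]
    (n : ℕ) (hn : 1 ≤ n) (β : F) :
    ∃ w : Matrix (Fin n ⊕ Fin n) (Fin n ⊕ Fin n) F,
      wᵀ * Matrix.J (Fin n) F * w = Matrix.J (Fin n) F ∧ Matrix.trace w = β := by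
  set i0 : Fin n := ⟨0, hn⟩
  set t : F := β - 2 * (n : F) + 2 with ht
  set E : Matrix (Fin n) (Fin n) F := Matrix.single i0 i0 1 with hEdef
  set E' : Matrix (Fin n) (Fin n) F := Matrix.single i0 i0 (t - 1) with hE'def
  have hEE : E * E = E := by
    rw [hEdef, Matrix.single_mul_single_same, one_mul]
  have hEE' : E * E' = E' := by
    rw [hEdef, hE'def, Matrix.single_mul_single_same, one_mul]
  have hE'E : E' * E = E' := by
    rw [hEdef, hE'def, Matrix.single_mul_single_same, mul_one]
  have hEt : Eᵀ = E := by
    ext i j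
    by_cases h1 : i = i0 <;> by_cases h2 : j = i0 <;>
      simp [hEdef, Matrix.single, Matrix.transpose_apply, h1, h2, and_comm]
  have hE't : E'ᵀ = E' := by
    ext i j
    by_cases h1 : i = i0 <;> by_cases h2 : j = i0 <;>
      simp [hE'def, Matrix.single, Matrix.transpose_apply, h1, h2, and_comm]
  refine ⟨Matrix.fromBlocks (1 - E) E (-E) (1 + E'), ?_, ?_⟩
  · rw [Matrix.J, Matrix.fromBlocks_transpose, Matrix.fromBlocks_multiply,
      Matrix.fromBlocks_multiply]
    congr 1 <;>
      simp only [Matrix.transpose_sub, Matrix.transpose_one, Matrix.transpose_add,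
        Matrix.transpose_neg, hEt, hE't] <;>
      noncomm_ring <;>
      simp [hEE, hEE', hE'E, mul_assoc]
  · have htr : (Matrix.fromBlocks (1 - E) E (-E) (1 + E')).trace
        = (1 - E).trace + (1 + E').trace := by
      simp [Matrix.trace, Fintype.sum_sum_type, Matrix.diag]
    rw [htr]
    have htrE : Matrix.trace E = 1 := by
      rw [Matrix.trace, hEdef]
      simp [Matrix.single, Matrix.diag]
    have htrE' : Matrix.trace E' = t - 1 := by
      rw [Matrix.trace, hE'def]
      simp [Matrix.single, Matrix.diag]
    simp [Matrix.trace_sub, Matrix.trace_add, htrE, htrE', Matrix.trace_one, ht]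
    ring
end

section
/- Let q be an odd prime power, λ the canonical additive character of F_q, and a ∈ F_q^*. Then ∑_{w ∈ SL(2,q)} λ(a·Tr w) = q·K(λ; a²), where K(λ;b) = ∑_{α ∈ F_q^*} λ(α + bα⁻¹) is the Kloosterman sum. -/
open Matrix

/-- The Kloosterman sum `K(λ; b) = ∑_{α ∈ F_q^*} λ(α + bα⁻¹)`. -/
noncomputable def kloosterman {F : Type*} [Field F] [Fintype F] [DecidableEq F]
    (lam : AddChar F ℂ) (b : F) : ℂ :=
  ∑ α : Fˣ, lam ((α : F) + b * ((α⁻¹ : Fˣ) : F))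

/-- Matrices over `F` indexed by `Fin 2` correspond to quadruples `(x, w, z, y) ↦ !![x,y;z,w]`. -/
private def entriesEquiv (F : Type*) : (F × F × F × F) ≃ Matrix (Fin 2) (Fin 2) F where
  toFun p := !![p.1, p.2.2.2; p.2.2.1, p.2.1]
  invFun m := (m 0 0, m 1 1, m 1 0, m 0 1)
  left_inv p := by simp
  right_inv m := by
    simp only
    exact (Matrix.eta_fin_two m).symm

/-- Counting solutions of `y * z = c` weighted by a constant. -/
private lemma count_mul_eq {F : Type*} [Field F] [Fintype F] [DecidableEq F] (c : F) (v : ℂ) :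
    (∑ z : F, ∑ y : F, (if y * z = c then v else 0))
      = ((Fintype.card F : ℂ) - 1) * v + (if c = 0 then (Fintype.card F : ℂ) * v else 0) := by
  rw [← Finset.sum_erase_add _ _ (Finset.mem_univ (0 : F))]
  congr 1
  · have h : ∀ z ∈ Finset.univ.erase (0 : F),
        (∑ y : F, (if y * z = c then v else 0)) = v := by
      intro z hz
      have hz0 : z ≠ 0 := Finset.ne_of_mem_erase hz
      have hcond : ∀ y : F, (y * z = c) ↔ (y = c * z⁻¹) := fun y => by
        rw [inv_eq_one_div, ← div_eq_mul_one_div, eq_div_iff hz0]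
      simp only [hcond]
      rw [Finset.sum_ite_eq' Finset.univ (c * z⁻¹) (fun _ => v), if_pos (Finset.mem_univ _)]
    rw [Finset.sum_congr rfl h, Finset.sum_const,
      Finset.card_erase_of_mem (Finset.mem_univ _), Finset.card_univ, nsmul_eq_mul]
    have hpos : (1 : ℕ) ≤ Fintype.card F := Fintype.card_pos
    push_cast [Nat.cast_sub hpos]
    ring
  · simp only [mul_zero]
    rcases eq_or_ne c 0 with rfl | hc
    · simp [Finset.sum_const, Finset.card_univ, mul_comm]
    · simp [Ne.symm hc, hc]

/-- Sum over units versus sum over nonzero field elements. -/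
private lemma sum_units_eq {F : Type*} [Field F] [Fintype F] [DecidableEq F] (g : F → ℂ) :
    ∑ u : Fˣ, g (u : F) = ∑ x : F, if x = 0 then 0 else g x := by
  have h1 : ∑ u : Fˣ, g (u : F)
      = ∑ x : {x : F // x ≠ 0}, g (x : F) :=
    Fintype.sum_equiv unitsEquivNeZero (fun u : Fˣ => g (u : F))
      (fun x : {x : F // x ≠ 0} => g (x : F)) (fun u => by simp [unitsEquivNeZero])
  have h2 : ∑ x : {x : F // x ≠ 0}, g (x : F)
      = ∑ x ∈ Finset.univ.filter (fun x : F => x ≠ 0), g x :=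
    (Finset.sum_subtype _ (fun x => by simp) g).symm
  rw [h1, h2, Finset.sum_filter]
  exact Finset.sum_congr rfl fun x _ => by rw [ite_not]

/-- for `q` odd, `λ` the canonical (primitive) additive character
of `F_q`, and `a ∈ F_q^*`: `∑_{w ∈ SL(2,q)} λ(a·Tr w) = q·K(λ; a²)`. -/
theorem sl2_gauss_sum_eq_kloosterman (F : Type*) [Field F] [Fintype F] [DecidableEq F]
    (hodd : Odd (Fintype.card F)) (lam : AddChar F ℂ) (hlam : lam.IsPrimitive)
    (a : F) (ha : a ≠ 0) (q : ℕ) (hq : q = Fintype.card F) :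
    ∑ w : Matrix.SpecialLinearGroup (Fin 2) F,
        lam (a * Matrix.trace (w : Matrix (Fin 2) (Fin 2) F)) =
      (q : ℂ) * kloosterman lam (a ^ 2) := by
  classical
  subst hq
  set q : ℕ := Fintype.card F with hqdef
  -- the sum of `lam (a * w)` over all of `F` vanishes
  have hsum0 : ∑ w : F, lam (a * w) = 0 := by
    have h := AddChar.sum_mulShift (ψ := lam) a hlam
    rw [if_neg ha] at h
    push_cast at h
    calc ∑ w : F, lam (a * w) = ∑ w : F, lam (w * a) := by simp_rw [mul_comm]
      _ = 0 := h
  -- Step 1: sum over the subtype as a conditional sum over all matrices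
  have h1 : (∑ w : Matrix.SpecialLinearGroup (Fin 2) F,
        lam (a * Matrix.trace (w : Matrix (Fin 2) (Fin 2) F)))
      = ∑ m : Matrix (Fin 2) (Fin 2) F, if m.det = 1 then lam (a * m.trace) else 0 := by
    rw [← Finset.sum_filter]
    exact (Finset.sum_subtype _ (fun m => by simp) (fun m : Matrix (Fin 2) (Fin 2) F => lam (a * m.trace))).symm
  -- Step 2: reindex by the four entries
  have h2 : (∑ m : Matrix (Fin 2) (Fin 2) F, if m.det = 1 then lam (a * m.trace) else 0)
      = ∑ x : F, ∑ w : F, ∑ z : F, ∑ y : F,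
          if y * z = x * w - 1 then lam (a * (x + w)) else 0 := by
    rw [← Equiv.sum_comp (entriesEquiv F)
      (fun m : Matrix (Fin 2) (Fin 2) F => if m.det = 1 then lam (a * m.trace) else 0)]
    rw [Fintype.sum_prod_type]
    refine Finset.sum_congr rfl fun x _ => ?_
    rw [Fintype.sum_prod_type]
    refine Finset.sum_congr rfl fun w _ => ?_
    rw [Fintype.sum_prod_type]
    refine Finset.sum_congr rfl fun z _ => ?_
    refine Finset.sum_congr rfl fun y _ => ?_
    have hdet : ((entriesEquiv F) (x, w, z, y)).det = x * w - y * z := by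
      simp [entriesEquiv, Matrix.det_fin_two_of]
    have htr : ((entriesEquiv F) (x, w, z, y)).trace = x + w := by
      simp [entriesEquiv, Matrix.trace_fin_two_of]
    rw [hdet, htr]
    congr 1
    exact propext ⟨fun h => by linear_combination -h, fun h => by linear_combination -h⟩
  -- Step 3: apply the count
  have h3 : (∑ x : F, ∑ w : F, ∑ z : F, ∑ y : F,
        if y * z = x * w - 1 then lam (a * (x + w)) else 0)
      = ∑ x : F, ∑ w : F, (((q : ℂ) - 1) * lam (a * (x + w))
          + (if x * w = 1 then (q : ℂ) * lam (a * (x + w)) else 0)) := by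
    refine Finset.sum_congr rfl fun x _ => Finset.sum_congr rfl fun w _ => ?_
    rw [count_mul_eq (x * w - 1) (lam (a * (x + w)))]
    simp only [sub_eq_zero]
    rfl
  -- Step 4: the first part vanishes
  have h4 : ∀ x : F, ∑ w : F, ((q : ℂ) - 1) * lam (a * (x + w)) = 0 := by
    intro x
    have : ∀ w : F, ((q : ℂ) - 1) * lam (a * (x + w))
        = (((q : ℂ) - 1) * lam (a * x)) * lam (a * w) := fun w => by
      rw [mul_add, AddChar.map_add_eq_mul]; ring
    simp_rw [this]
    rw [← Finset.mul_sum, hsum0, mul_zero]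
  -- Step 5: the second part
  have h5 : ∀ x : F, (∑ w : F, if x * w = 1 then (q : ℂ) * lam (a * (x + w)) else 0)
      = if x = 0 then 0 else (q : ℂ) * lam (a * x + a * x⁻¹) := by
    intro x
    rcases eq_or_ne x 0 with rfl | hx
    · simp
    · rw [if_neg hx]
      have hcond : ∀ w : F, (x * w = 1) ↔ (w = x⁻¹) := fun w => by
        rw [inv_eq_one_div, eq_div_iff hx, mul_comm]
      simp only [hcond]
      rw [Finset.sum_ite_eq' Finset.univ x⁻¹
        (fun w => (q : ℂ) * lam (a * (x + w))), if_pos (Finset.mem_univ _), mul_add]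
  -- Step 6: identify the Kloosterman sum
  have hK : kloosterman lam (a ^ 2) = ∑ x : F, if x = 0 then 0 else lam (a * x + a * x⁻¹) := by
    unfold kloosterman
    set a₀ : Fˣ := Units.mk0 a ha with ha₀
    have hre : (∑ α : Fˣ, lam ((α : F) + a ^ 2 * ((α⁻¹ : Fˣ) : F)))
        = ∑ u : Fˣ, lam (((a₀ * u : Fˣ) : F) + a ^ 2 * (((a₀ * u)⁻¹ : Fˣ) : F)) :=
      (Equiv.sum_comp (Equiv.mulLeft a₀)
        (fun α : Fˣ => lam ((α : F) + a ^ 2 * ((α⁻¹ : Fˣ) : F)))).symm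
    rw [hre]
    have hsimp : ∀ u : Fˣ,
        lam (((a₀ * u : Fˣ) : F) + a ^ 2 * (((a₀ * u)⁻¹ : Fˣ) : F))
          = lam (a * (u : F) + a * ((u : F))⁻¹) := by
      intro u
      congr 1
      have h1 : ((a₀ * u : Fˣ) : F) = a * (u : F) := rfl
      have h2 : (((a₀ * u)⁻¹ : Fˣ) : F) = a⁻¹ * ((u : F))⁻¹ := by
        rw [mul_inv, Units.val_mul]
        simp [ha₀]
      rw [h1, h2]
      have hu : ((u : F)) ≠ 0 := Units.ne_zero u
      field_simp
    simp_rw [hsimp]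
    rw [sum_units_eq (fun x => lam (a * x + a * x⁻¹))]
  -- Assemble
  rw [h1, h2, h3]
  simp_rw [Finset.sum_add_distrib]
  have hz : ∑ x : F, ∑ w : F, ((q : ℂ) - 1) * lam (a * (x + w)) = 0 :=
    Finset.sum_eq_zero fun x _ => h4 x
  rw [hz, zero_add]
  simp_rw [h5]
  rw [hK, Finset.mul_sum]
  refine Finset.sum_congr rfl fun x _ => ?_
  rcases eq_or_ne x 0 with rfl | hx
  · simp
  · rw [if_neg hx, if_neg hx]
end
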